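/- arXiv:2007.05480 — 8 statements merged into one kernel-verified Lean document; each statement's English description precedes it below -/
import Mathlib

section
/- Let a ≥ 1, ρ > 0, and γ ≥ 0. If X, Y ⊆ ℝ are compact and X is contained in the closed aρ-neighborhood of Y, then H^γ_{≥ρ}(X) ≤ 2(2a+1)^γ · 2 · H^γ_{≥ρ}(Y), i.e., H^γ_{≥ρ}(X) ≪_a H^γ_{≥ρ}(Y). -/
/-- The discrete Hausdorff content at scale `ρ` and dimension `γ`. -/
noncomputable def discreteHausdorffContent {α : Type*} [PseudoMetricSpace α] (ρ γ : ℝ)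
    (X : Set α) : ENNReal :=
  ⨅ (s : Set (α × ℝ)) (_ : s.Countable) (_ : ∀ p ∈ s, ρ ≤ p.2)
    (_ : X ⊆ ⋃ p ∈ s, Metric.ball p.1 (p.2 / 2)),
    ∑' p : s, ENNReal.ofReal ((p : α × ℝ).2 ^ γ)

/-- If `X, Y ⊆ ℝ` are compact and `X` is contained in the closed `aρ`-neighborhood of `Y`,
then `H^γ_{≥ρ}(X) ≤ 2 (2a+1)^γ · 2 · H^γ_{≥ρ}(Y)`. -/
theorem stmt3 (a ρ γ : ℝ) (ha : 1 ≤ a) (hρ : 0 < ρ) (hγ : 0 ≤ γ) (X Y : Set ℝ)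
    (hX : IsCompact X) (hY : IsCompact Y)
    (hXY : X ⊆ {z : ℝ | ∃ y ∈ Y, |z - y| ≤ a * ρ}) :
    discreteHausdorffContent ρ γ X ≤
      ENNReal.ofReal (2 * (2 * a + 1) ^ γ * 2) * discreteHausdorffContent ρ γ Y := by
  have ha1 : (1:ℝ) ≤ 2 * a + 1 := by linarith
  have hapos : (0:ℝ) < 2 * a + 1 := by linarith
  have hCreal : (0:ℝ) < (2 * a + 1) ^ γ := Real.rpow_pos_of_pos hapos γ
  set C : ENNReal := ENNReal.ofReal ((2 * a + 1) ^ γ) with hCdef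
  have hC0 : C ≠ 0 := by
    simp [hCdef, ENNReal.ofReal_pos.mpr hCreal, ne_of_gt]
  have hCt : C ≠ ⊤ := ENNReal.ofReal_ne_top
  have key : discreteHausdorffContent ρ γ X ≤ C * discreteHausdorffContent ρ γ Y := by
    rw [mul_comm, ← ENNReal.div_le_iff_le_mul (Or.inl hC0) (Or.inl hCt)]
    refine le_iInf fun s => le_iInf fun hsc => le_iInf fun hsρ => le_iInf fun hsY => ?_
    rw [ENNReal.div_le_iff_le_mul (Or.inl hC0) (Or.inl hCt), mul_comm]
    -- the enlarged cover
    set f : ℝ × ℝ → ℝ × ℝ := fun p => (p.1, (2 * a + 1) * p.2) with hf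
    have hfinj : Function.Injective f := by
      intro p q h
      simp only [hf, Prod.mk.injEq] at h
      exact Prod.ext h.1 (mul_left_cancel₀ (ne_of_gt hapos) h.2)
    have h1 : (f '' s).Countable := hsc.image f
    have h2 : ∀ p ∈ f '' s, ρ ≤ p.2 := by
      rintro p ⟨q, hq, rfl⟩
      have := hsρ q hq
      calc ρ ≤ q.2 := this
        _ ≤ (2 * a + 1) * q.2 := le_mul_of_one_le_left (le_trans hρ.le this) ha1
    have h3 : X ⊆ ⋃ p ∈ f '' s, Metric.ball p.1 (p.2 / 2) := by
      intro z hz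
      obtain ⟨y, hy, hzy⟩ := hXY hz
      obtain ⟨q, hq, hyq⟩ := Set.mem_iUnion₂.mp (hsY hy)
      have hq2 : ρ ≤ q.2 := hsρ q hq
      refine Set.mem_iUnion₂.mpr ⟨f q, Set.mem_image_of_mem f hq, ?_⟩
      simp only [hf, Metric.mem_ball] at hyq ⊢
      have hd : dist z q.1 ≤ dist z y + dist y q.1 := dist_triangle z y q.1
      have hdzy : dist z y ≤ a * ρ := by rwa [Real.dist_eq]
      have : dist z q.1 < a * q.2 + q.2 / 2 := by
        have : a * ρ ≤ a * q.2 := by nlinarith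
        linarith
      calc dist z q.1 < a * q.2 + q.2 / 2 := this
        _ = (2 * a + 1) * q.2 / 2 := by ring
    calc discreteHausdorffContent ρ γ X
        ≤ ∑' p : (f '' s : Set (ℝ × ℝ)), ENNReal.ofReal ((p : ℝ × ℝ).2 ^ γ) := by
          exact iInf_le_of_le (f '' s) (iInf_le_of_le h1 (iInf_le_of_le h2 (iInf_le_of_le h3 le_rfl)))
      _ = ∑' p : s, ENNReal.ofReal ((f p : ℝ × ℝ).2 ^ γ) := by
          rw [← (Equiv.Set.imageOfInjOn f s (hfinj.injOn)).tsum_eq]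
          rfl
      _ = C * ∑' p : s, ENNReal.ofReal ((p : ℝ × ℝ).2 ^ γ) := by
          rw [← ENNReal.tsum_mul_left]
          refine tsum_congr fun p => ?_
          have hp2 : 0 < (p : ℝ × ℝ).2 := lt_of_lt_of_le hρ (hsρ p p.2)
          simp only [hf]
          rw [Real.mul_rpow hapos.le hp2.le, ENNReal.ofReal_mul hCreal.le]
  refine key.trans (mul_le_mul_left ?_ _)
  exact ENNReal.ofReal_le_ofReal (by nlinarith)
end

section
/- Fix an integer r ≥ 2 and reals 0 < γ₃ < γ₄ < γ₅ such that B := γ₄ − γ₃ − log_r 2 > 0, and set A := γ₅ − γ₄ + log_r 2. If Γ is a finite tree in which every node has at most r^{γ₅} children, then at least one of the following holds: (I) at least r^{γ₃} children Q of the root satisfy H_r^{γ₄}(Γ_Q) ≥ H_r^{γ₄}(Γ) · r^{−A}; or (II) at least one child Q of the root satisfies H_r^{γ₄}(Γ_Q) ≥ H_r^{γ₄}(Γ) · r^{B}. -/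
/-- A finite tree of height `N`, encoded as a finite set of words: a node of height `n` is a
list of length `n`, the root is `[]`, and the parent of a nonempty word is its tail.  The
conditions say that the root belongs to the tree, all nodes have height at most `N`, the set is
closed under taking parents, and every node of height `< N` has a child (so the parent function
maps each level onto the previous one and all leaves have height `N`). -/
def IsLTree (N : ℕ) (Γ : Finset (List ℕ)) : Prop :=
  [] ∈ Γ ∧ (∀ w ∈ Γ, w.length ≤ N) ∧ (∀ w ∈ Γ, w ≠ [] → w.tail ∈ Γ) ∧
    (∀ w ∈ Γ, w.length < N → ∃ a : ℕ, a :: w ∈ Γ)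

/-- The children of the node `w` in the tree `Γ`. -/
def children (Γ : Finset (List ℕ)) (w : List ℕ) : Finset (List ℕ) :=
  Γ.filter fun v => v ≠ [] ∧ v.tail = w

/-- A cut of the tree `Γ` (of height `N`): a set of nodes meeting, for every leaf, the path
from that leaf to the root. -/
def IsCut (N : ℕ) (Γ C : Finset (List ℕ)) : Prop :=
  C ⊆ Γ ∧ ∀ w ∈ Γ, w.length = N → ∃ k : ℕ, w.drop k ∈ C

/-- The Hausdorff content of the tree `Γ` (of height `N`) with base `r` at dimension `γ`:
the minimum over cuts `C` of `∑_{Q ∈ C} r^{-height(Q) γ}`. -/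
noncomputable def treeContent (r : ℕ) (γ : ℝ) (N : ℕ) (Γ : Finset (List ℕ)) : ℝ :=
  sInf {x : ℝ | ∃ C : Finset (List ℕ), IsCut N Γ C ∧
    x = ∑ w ∈ C, (r : ℝ) ^ (-(w.length : ℝ) * γ)}

/-- The tree induced at the node `Q`: its nodes are the words `v` with `v ++ Q ∈ Γ`. -/
def inducedTree (Γ : Finset (List ℕ)) (Q : List ℕ) : Finset (List ℕ) :=
  (Γ.filter fun w => Q <:+ w).image fun w => w.take (w.length - Q.length)

/-!
Gluing optimal cuts of the subtrees `Γ_Q` below the children `Q` of the root gives a cut of `Γ`,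
so `H(Γ) ≤ r^{-γ₄} ∑_Q H(Γ_Q)`. If both alternatives failed, fewer than `r^{γ₃}` children would
have `H(Γ_Q) ≥ H(Γ) r^{-A}`, each of them with `H(Γ_Q) < H(Γ) r^{B}`, and the at most `r^{γ₅}`
others would have `H(Γ_Q) < H(Γ) r^{-A}`. The exponents are chosen so that
`r^{γ₃} r^{B} = r^{γ₅} r^{-A} = r^{γ₄} / 2`, hence the sum would be `< r^{γ₄} H(Γ)`:
a contradiction.
-/

open Finset

section Content

variable (r : ℕ) (γ : ℝ) (N : ℕ) (Γ : Finset (List ℕ))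

lemma isCut_self : IsCut N Γ Γ :=
  ⟨subset_rfl, fun w hw _ => ⟨0, by simpa using hw⟩⟩

lemma cutSums_finite :
    {x : ℝ | ∃ C : Finset (List ℕ), IsCut N Γ C ∧
      x = ∑ w ∈ C, (r : ℝ) ^ (-(w.length : ℝ) * γ)}.Finite := by
  refine (Γ.powerset.finite_toSet.image fun C => ∑ w ∈ C, (r : ℝ) ^ (-(w.length : ℝ) * γ)).subset ?_
  rintro x ⟨C, hC, rfl⟩
  exact ⟨C, by simpa using hC.1, rfl⟩

lemma exists_isCut_treeContent_eq :
    ∃ C, IsCut N Γ C ∧ treeContent r γ N Γ = ∑ w ∈ C, (r : ℝ) ^ (-(w.length : ℝ) * γ) :=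
  Set.Nonempty.csInf_mem (by exact ⟨_, Γ, isCut_self N Γ, rfl⟩) (cutSums_finite r γ N Γ)

lemma treeContent_le_sum {C : Finset (List ℕ)} (hC : IsCut N Γ C) :
    treeContent r γ N Γ ≤ ∑ w ∈ C, (r : ℝ) ^ (-(w.length : ℝ) * γ) :=
  csInf_le (cutSums_finite r γ N Γ).bddBelow ⟨C, hC, rfl⟩

lemma treeContent_nonneg : 0 ≤ treeContent r γ N Γ := by
  obtain ⟨C, -, hC⟩ := exists_isCut_treeContent_eq r γ N Γ
  exact hC ▸ sum_nonneg fun w _ => Real.rpow_nonneg (Nat.cast_nonneg r) _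

end Content

section Tree

variable {N : ℕ} {Γ : Finset (List ℕ)}

lemma mem_inducedTree {Q v : List ℕ} : v ∈ inducedTree Γ Q ↔ v ++ Q ∈ Γ := by
  simp only [inducedTree, mem_image, mem_filter]
  constructor
  · rintro ⟨w, ⟨hw, u, rfl⟩, rfl⟩
    simpa using hw
  · exact fun h => ⟨v ++ Q, ⟨h, v, rfl⟩, by simp⟩

lemma eq_singleton_of_mem_children_nil {Q : List ℕ} (h : Q ∈ children Γ []) : ∃ a, Q = [a] := by
  simp only [children, mem_filter] at h
  rcases Q with _ | ⟨a, _ | ⟨b, t⟩⟩ <;> simp_all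

lemma singleton_mem_children_nil {a : ℕ} : [a] ∈ children Γ [] ↔ [a] ∈ Γ := by
  simp [children]

lemma IsLTree.drop_mem (hΓ : IsLTree N Γ) {w : List ℕ} (hw : w ∈ Γ) (k : ℕ) : w.drop k ∈ Γ := by
  induction k with
  | zero => simpa using hw
  | succ k ih =>
    rw [← List.tail_drop]
    by_cases h : w.drop k = []
    · exact h ▸ hΓ.1
    · exact hΓ.2.2.1 _ ih h

lemma IsLTree.children_nil_nonempty (hΓ : IsLTree N Γ) (hN : 1 ≤ N) :
    (children Γ []).Nonempty := by
  obtain ⟨a, ha⟩ := hΓ.2.2.2 [] hΓ.1 (by simp; omega)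
  exact ⟨[a], singleton_mem_children_nil.2 ha⟩

def graftCuts (Γ : Finset (List ℕ)) (C : List ℕ → Finset (List ℕ)) : Finset (List ℕ) :=
  (children Γ []).biUnion fun Q => (C Q).image (· ++ Q)

lemma IsLTree.isCut_graftCuts (hΓ : IsLTree N Γ) (hN : 1 ≤ N) {C : List ℕ → Finset (List ℕ)}
    (hC : ∀ Q ∈ children Γ [], IsCut (N - 1) (inducedTree Γ Q) (C Q)) :
    IsCut N Γ (graftCuts Γ C) := by
  constructor
  · intro x hx
    obtain ⟨Q, hQ, hx⟩ := mem_biUnion.1 hx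
    obtain ⟨v, hv, rfl⟩ := mem_image.1 hx
    exact mem_inducedTree.1 ((hC Q hQ).1 hv)
  · intro w hw hwN
    obtain ⟨v, a, rfl⟩ := (List.eq_nil_or_concat' w).resolve_left (by rintro rfl; simp at hwN; omega)
    have hv : v.length = N - 1 := by simp at hwN; omega
    have ha : [a] ∈ children Γ [] := by
      have h := hΓ.drop_mem hw v.length
      rwa [List.drop_left, ← singleton_mem_children_nil] at h
    obtain ⟨k, hk⟩ := (hC [a] ha).2 v (mem_inducedTree.2 hw) hv
    -- for `k > N - 1`, `w.drop k` has also lost the last letter `a`, so `k` is capped at `N - 1`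
    have hk' : v.drop (min k (N - 1)) = v.drop k := by
      rcases le_total k (N - 1) with h | h
      · rw [min_eq_left h]
      · rw [min_eq_right h, List.drop_eq_nil_of_le (by omega), List.drop_eq_nil_of_le (by omega)]
    refine ⟨min k (N - 1), mem_biUnion.2 ⟨[a], ha, mem_image.2 ⟨v.drop k, hk, ?_⟩⟩⟩
    rw [List.drop_append_of_le_length (by omega), hk']

lemma sum_graftCuts {r : ℕ} (hr : 0 < r) (γ : ℝ) (C : List ℕ → Finset (List ℕ)) :
    ∑ w ∈ graftCuts Γ C, (r : ℝ) ^ (-(w.length : ℝ) * γ) =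
      (r : ℝ) ^ (-γ) * ∑ Q ∈ children Γ [], ∑ v ∈ C Q, (r : ℝ) ^ (-(v.length : ℝ) * γ) := by
  have hdisj : (children Γ [] : Set (List ℕ)).PairwiseDisjoint fun Q => (C Q).image (· ++ Q) := by
    intro Q hQ Q' hQ' hne
    obtain ⟨a, rfl⟩ := eq_singleton_of_mem_children_nil hQ
    obtain ⟨b, rfl⟩ := eq_singleton_of_mem_children_nil hQ'
    refine disjoint_left.2 fun x hx hx' => hne ?_
    obtain ⟨v, -, rfl⟩ := mem_image.1 hx
    obtain ⟨v', -, h⟩ := mem_image.1 hx'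
    exact (List.append_inj_right' h rfl).symm
  rw [graftCuts, sum_biUnion hdisj, mul_sum]
  refine sum_congr rfl fun Q hQ => ?_
  obtain ⟨a, rfl⟩ := eq_singleton_of_mem_children_nil hQ
  rw [sum_image fun x _ y _ h => List.append_cancel_right h, mul_sum]
  refine sum_congr rfl fun v _ => ?_
  rw [← Real.rpow_add (by exact_mod_cast hr)]
  simp only [List.length_append, List.length_singleton, Nat.cast_add, Nat.cast_one]
  ring_nf

theorem IsLTree.treeContent_le_rpow_neg_mul_sum_children (hΓ : IsLTree N Γ) (hN : 1 ≤ N)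
    {r : ℕ} (hr : 0 < r) (γ : ℝ) :
    treeContent r γ N Γ ≤
      (r : ℝ) ^ (-γ) * ∑ Q ∈ children Γ [], treeContent r γ (N - 1) (inducedTree Γ Q) := by
  choose C hC hCsum using fun Q => exists_isCut_treeContent_eq r γ (N - 1) (inducedTree Γ Q)
  calc treeContent r γ N Γ
      ≤ ∑ w ∈ graftCuts Γ C, (r : ℝ) ^ (-(w.length : ℝ) * γ) :=
        treeContent_le_sum r γ N Γ (hΓ.isCut_graftCuts hN fun Q _ => hC Q)
    _ = _ := by simp only [sum_graftCuts hr, hCsum]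

end Tree

lemma Finset.sum_lt_of_card_filter_le {ι : Type*} (s : Finset ι) (f : ι → ℝ) {a b K M : ℝ}
    (hs : s.Nonempty) (ha : 0 ≤ a) (hb : 0 ≤ b) (hK : (#{i ∈ s | a ≤ f i} : ℝ) ≤ K)
    (hM : (#s : ℝ) ≤ M) (hf : ∀ i ∈ s, f i < b) :
    ∑ i ∈ s, f i < K * b + M * a := by
  have hbad : (#{i ∈ s | ¬a ≤ f i} : ℝ) ≤ M :=
    le_trans (by exact_mod_cast card_filter_le _ _) hM
  calc ∑ i ∈ s, f i
      < ∑ i ∈ s, if a ≤ f i then b else a :=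
        sum_lt_sum_of_nonempty hs fun i hi => by
          split_ifs with h
          exacts [hf i hi, lt_of_not_ge h]
    _ = #{i ∈ s | a ≤ f i} * b + #{i ∈ s | ¬a ≤ f i} * a := by
        rw [sum_ite, sum_const, sum_const, nsmul_eq_mul, nsmul_eq_mul]
    _ ≤ K * b + M * a := by gcongr

lemma Real.rpow_mul_rpow_add_rpow_mul_rpow_eq {b : ℝ} (hb : 1 < b) (x y z : ℝ) :
    b ^ x * b ^ (z - x - logb b 2) + b ^ y * b ^ (-(y - z + logb b 2)) = b ^ z := by
  have hb0 : 0 < b := by linarith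
  have half : b ^ (z - logb b 2) = b ^ z / 2 := by
    rw [rpow_sub hb0, rpow_logb hb0 hb.ne' two_pos]
  rw [← rpow_add hb0, ← rpow_add hb0, show x + (z - x - logb b 2) = z - logb b 2 by ring,
    show y + -(y - z + logb b 2) = z - logb b 2 by ring, half]
  ring

theorem stmt8_general (r : ℕ) (hr : 2 ≤ r) (γ₃ γ₄ γ₅ : ℝ)
    (N : ℕ) (hN : 1 ≤ N) (Γ : Finset (List ℕ)) (hΓ : IsLTree N Γ)
    (hchild : ∀ w ∈ Γ, ((children Γ w).card : ℝ) ≤ (r : ℝ) ^ γ₅) :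
    (r : ℝ) ^ γ₃ ≤
        (({Q ∈ (children Γ [] : Set (List ℕ)) |
          treeContent r γ₄ N Γ * (r : ℝ) ^ (-(γ₅ - γ₄ + Real.log 2 / Real.log r)) ≤
            treeContent r γ₄ (N - 1) (inducedTree Γ Q)}).ncard : ℝ) ∨
    ∃ Q ∈ children Γ [],
      treeContent r γ₄ N Γ * (r : ℝ) ^ (γ₄ - γ₃ - Real.log 2 / Real.log r) ≤
        treeContent r γ₄ (N - 1) (inducedTree Γ Q) := by
  by_contra! ⟨hfew, hsmall⟩
  simp only [SetLike.mem_coe, ← coe_filter, Set.ncard_coe_finset] at hfew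
  set H := treeContent r γ₄ N Γ
  have hr1 : (1 : ℝ) < r := by exact_mod_cast hr
  have hH : 0 ≤ H := treeContent_nonneg r γ₄ N Γ
  have hsum := (children Γ []).sum_lt_of_card_filter_le _ (hΓ.children_nil_nonempty hN)
    (mul_nonneg hH (by positivity)) (mul_nonneg hH (by positivity)) hfew.le (hchild [] hΓ.1) hsmall
  have hexp := Real.rpow_mul_rpow_add_rpow_mul_rpow_eq hr1 γ₃ γ₅ γ₄
  unfold Real.logb at hexp
  refine lt_irrefl H ?_
  calc H ≤ (r : ℝ) ^ (-γ₄) * ∑ Q ∈ children Γ [], treeContent r γ₄ (N - 1) (inducedTree Γ Q) :=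
        hΓ.treeContent_le_rpow_neg_mul_sum_children hN (by omega) γ₄
    _ < (r : ℝ) ^ (-γ₄) * ((r : ℝ) ^ γ₃ * (H * (r : ℝ) ^ (γ₄ - γ₃ - Real.log 2 / Real.log r)) +
          (r : ℝ) ^ γ₅ * (H * (r : ℝ) ^ (-(γ₅ - γ₄ + Real.log 2 / Real.log r)))) := by gcongr
    _ = H * ((r : ℝ) ^ (-γ₄) * (r : ℝ) ^ γ₄) := by rw [← hexp]; ring
    _ = H := by rw [← Real.rpow_add (by positivity), neg_add_cancel, Real.rpow_zero, mul_one]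

/-- Tree dichotomy: with `A = γ₅ - γ₄ + log_r 2` and `B = γ₄ - γ₃ - log_r 2 > 0`, if every node
of `Γ` has at most `r^{γ₅}` children, then either at least `r^{γ₃}` children `Q` of the root
satisfy `H_r^{γ₄}(Γ_Q) ≥ H_r^{γ₄}(Γ) r^{-A}`, or some child `Q` of the root satisfies
`H_r^{γ₄}(Γ_Q) ≥ H_r^{γ₄}(Γ) r^{B}`. -/
theorem stmt8 (r : ℕ) (hr : 2 ≤ r) (γ₃ γ₄ γ₅ : ℝ)
    (h3 : 0 < γ₃) (h34 : γ₃ < γ₄) (h45 : γ₄ < γ₅)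
    (hB : 0 < γ₄ - γ₃ - Real.log 2 / Real.log r)
    (N : ℕ) (hN : 1 ≤ N) (Γ : Finset (List ℕ)) (hΓ : IsLTree N Γ)
    (hchild : ∀ w ∈ Γ, ((children Γ w).card : ℝ) ≤ (r : ℝ) ^ γ₅) :
    (r : ℝ) ^ γ₃ ≤
        (({Q ∈ (children Γ [] : Set (List ℕ)) |
          treeContent r γ₄ N Γ * (r : ℝ) ^ (-(γ₅ - γ₄ + Real.log 2 / Real.log r)) ≤
            treeContent r γ₄ (N - 1) (inducedTree Γ Q)}).ncard : ℝ) ∨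
    ∃ Q ∈ children Γ [],
      treeContent r γ₄ N Γ * (r : ℝ) ^ (γ₄ - γ₃ - Real.log 2 / Real.log r) ≤
        treeContent r γ₄ (N - 1) (inducedTree Γ Q) :=
  stmt8_general r hr γ₃ γ₄ γ₅ N hN Γ hΓ hchild
end

section
/- Let r, s ≥ 2 be multiplicatively independent integers (log r / log s is irrational). If A ⊆ ℕ₀ is simultaneously ×r-invariant and ×s-invariant, then either A is finite or A = ℕ₀. -/
/-- `Φ_r` deletes the least significant base-`r` digit: `Φ_r(n) = ⌊n/r⌋`. -/
def Phi (r n : ℕ) : ℕ := n / r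

/-- `Ψ_r` deletes the most significant base-`r` digit:
`Ψ_r(n) = n - r^k ⌊n/r^k⌋ = n % r^k` where `k = ⌊log n / log r⌋` (and `Ψ_r(0) = 0`). -/
def Psi (r n : ℕ) : ℕ := n % r ^ Nat.log r n

/-- A set `A ⊆ ℕ₀` is `×r`-invariant if `Φ_r(A) ⊆ A` and `Ψ_r(A) ⊆ A`. -/
def TimesRInvariant (r : ℕ) (A : Set ℕ) : Prop :=
  (∀ n ∈ A, Phi r n ∈ A) ∧ (∀ n ∈ A, Psi r n ∈ A)


/-!
Write `p = log r`, `q = log s`. Since `p / q` is irrational, `ℤp + ℤq` is dense, so some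
`δ = a p - b q` (or `b q - a p`) with `a, b ∈ ℕ` is positive and arbitrarily small; stepping by `δ`
and by `q` shows that `{i p + j q : i, j ∈ ℕ}` eventually meets every interval of length `δ`.
Hence for every `m ≥ 1` and every large `N` some `r^i s^j` lies in `(N / (m + 1), N / m]`, i.e.
`N / (r^i s^j) = m`. An infinite `A` contains such an `N`, and applying `Φ_r` `i` times and `Φ_s`
`j` times to it yields `m ∈ A`.
-/

open Set

lemma div_pow_mem_of_forall_phi_mem {r : ℕ} {A : Set ℕ} (hA : ∀ n ∈ A, Phi r n ∈ A) (i : ℕ)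
    {n : ℕ} (hn : n ∈ A) : n / r ^ i ∈ A := by
  induction i with
  | zero => simpa using hn
  | succ i ih => rw [pow_succ, ← Nat.div_div_eq_div_mul]; exact hA _ ih

lemma exists_natCast_mul_sub_mem_Ioo {p q ε : ℝ} (hp : 0 < p) (hq : 0 < q)
    (h : Irrational (p / q)) (hε : 0 < ε) :
    ∃ a b : ℕ, ∃ δ ∈ Ioo 0 ε, a * p = b * q + δ ∨ b * q = a * p + δ := by
  obtain ⟨z, hz, hz0, hzε⟩ := (dense_addSubgroupClosure_pair_iff.2 h).exists_between
    (lt_min hε (add_pos hp hq))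
  obtain ⟨m, n, rfl⟩ := AddSubgroup.mem_closure_pair.1 hz
  simp only [zsmul_eq_mul, lt_min_iff] at hz0 hzε
  rcases le_or_gt m 0 with hm | hm <;> rcases le_or_gt n 0 with hn | hn
  · nlinarith [mul_nonpos_of_nonpos_of_nonneg (Int.cast_nonpos.2 hm) hp.le,
      mul_nonpos_of_nonpos_of_nonneg (Int.cast_nonpos.2 hn) hq.le]
  · obtain ⟨a, rfl⟩ := Int.exists_eq_neg_ofNat hm
    lift n to ℕ using hn.le
    exact ⟨a, n, _, ⟨hz0, hzε.1⟩, Or.inr (by push_cast; ring)⟩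
  · obtain ⟨b, rfl⟩ := Int.exists_eq_neg_ofNat hn
    lift m to ℕ using hm.le
    exact ⟨m, b, _, ⟨hz0, hzε.1⟩, Or.inl (by push_cast; ring)⟩
  · have hm1 : (1 : ℝ) ≤ m := by exact_mod_cast hm
    have hn1 : (1 : ℝ) ≤ n := by exact_mod_cast hn
    nlinarith

lemma exists_natCast_mul_add_mem_Ioc_of_eq {p q δ : ℝ} {a b : ℕ} (hq : 0 < q) (hδ : 0 < δ)
    (h : a * p = b * q + δ) :
    ∃ T, ∀ x ≥ T, ∃ i j : ℕ, i * p + j * q ∈ Ioc x (x + δ) := by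
  obtain ⟨K, hK⟩ := exists_nat_ge (q / δ)
  -- The points `K b q + n q + k δ = k a p + ((K - k) b + n) q` with `k ≤ K` lie `δ` apart
  -- along stretches of length `K δ ≥ q`, so their shifts by multiples of `q` cover `[K b q, ∞)`.
  refine ⟨K * b * q, fun x hx => ?_⟩
  set n := ⌊(x - K * b * q) / q⌋₊
  set z := x - K * b * q - n * q
  have hz0 : 0 ≤ z := by
    have := Nat.floor_le (div_nonneg (sub_nonneg.2 hx) hq.le)
    rw [le_div_iff₀ hq] at this
    linarith
  have hzq : z < q := by
    have := Nat.lt_floor_add_one ((x - K * b * q) / q)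
    rw [div_lt_iff₀ hq] at this
    linarith
  set k := ⌊z / δ⌋₊ + 1
  have hkδ : z < k * δ ∧ k * δ ≤ z + δ := by
    have h1 := Nat.floor_le (div_nonneg hz0 hδ.le)
    have h2 := Nat.lt_floor_add_one (z / δ)
    rw [le_div_iff₀ hδ] at h1
    rw [div_lt_iff₀ hδ] at h2
    simp only [k, Nat.cast_add, Nat.cast_one]
    constructor <;> linarith
  have hkK : k ≤ K := by
    rw [div_le_iff₀ hδ] at hK
    have : (k : ℝ) < K + 1 := by nlinarith
    exact Nat.lt_succ_iff.1 (by exact_mod_cast this)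
  refine ⟨k * a, (K - k) * b + n, ?_⟩
  have hcomb : ((k * a : ℕ) : ℝ) * p + (((K - k) * b + n : ℕ) : ℝ) * q
      = K * b * q + n * q + k * δ := by
    push_cast [Nat.cast_sub hkK]
    linear_combination (k : ℝ) * h
  rw [hcomb]
  constructor <;> linarith [hkδ.1, hkδ.2]

lemma exists_natCast_mul_add_mem_Ioc {p q ε : ℝ} (hp : 0 < p) (hq : 0 < q)
    (h : Irrational (p / q)) (hε : 0 < ε) :
    ∃ T, ∀ x ≥ T, ∃ i j : ℕ, i * p + j * q ∈ Ioc x (x + ε) := by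
  obtain ⟨a, b, δ, ⟨hδ, hδε⟩, hab⟩ := exists_natCast_mul_sub_mem_Ioo hp hq h hε
  obtain ⟨T, hT⟩ : ∃ T, ∀ x ≥ T, ∃ i j : ℕ, i * p + j * q ∈ Ioc x (x + δ) := by
    rcases hab with hab | hba
    · exact exists_natCast_mul_add_mem_Ioc_of_eq hq hδ hab
    · obtain ⟨T, hT⟩ := exists_natCast_mul_add_mem_Ioc_of_eq hp hδ hba
      refine ⟨T, fun x hx => ?_⟩
      obtain ⟨i, j, hij⟩ := hT x hx
      exact ⟨j, i, add_comm (i * q) (j * p) ▸ hij⟩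
  refine ⟨T, fun x hx => ?_⟩
  obtain ⟨i, j, hij⟩ := hT x hx
  exact ⟨i, j, Ioc_subset_Ioc_right (by linarith) hij⟩

lemma div_eq_of_log_mem_Ioc {N P m : ℕ} (hN : 0 < N) (hP : 0 < P) (hm : 0 < m)
    (h : Real.log P ∈ Ioc (Real.log N - Real.log (m + 1)) (Real.log N - Real.log m)) :
    N / P = m := by
  have hmR : (0 : ℝ) < m := by exact_mod_cast hm
  have hPR : (0 : ℝ) < P := by exact_mod_cast hP
  have hNR : (0 : ℝ) < N := by exact_mod_cast hN
  apply Nat.div_eq_of_lt_le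
  · have : Real.log (m * P) ≤ Real.log N := by
      rw [Real.log_mul hmR.ne' hPR.ne']; linarith [h.2]
    exact_mod_cast (Real.log_le_log_iff (by positivity) hNR).1 this
  · have : Real.log N < Real.log ((m + 1) * P) := by
      rw [Real.log_mul (by positivity) hPR.ne']; linarith [h.1]
    exact_mod_cast (Real.log_lt_log_iff hNR (by positivity)).1 this

lemma exists_div_pow_mul_pow_eq {r s : ℕ} (hr : 1 < r) (hs : 1 < s)
    (hind : Irrational (Real.log r / Real.log s)) (m : ℕ) :
    ∃ N₀, ∀ N ≥ N₀, ∃ i j : ℕ, N / (r ^ i * s ^ j) = m := by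
  rcases Nat.eq_zero_or_pos m with rfl | hm
  · refine ⟨0, fun N _ => ⟨N, 0, ?_⟩⟩
    rw [pow_zero, mul_one, Nat.div_eq_of_lt (Nat.lt_pow_self hr)]
  have hmR : (0 : ℝ) < m := by exact_mod_cast hm
  obtain ⟨T, hT⟩ := exists_natCast_mul_add_mem_Ioc
    (Real.log_pos (by exact_mod_cast hr)) (Real.log_pos (by exact_mod_cast hs)) hind
    (sub_pos.2 (Real.log_lt_log hmR (lt_add_one (m : ℝ))))
  refine ⟨⌈(m + 1) * Real.exp T⌉₊, fun N hN => ?_⟩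
  have hNR : (m + 1) * Real.exp T ≤ N := Nat.ceil_le.1 hN
  have hNpos : 0 < N := by
    exact_mod_cast (by positivity : (0 : ℝ) < (m + 1) * Real.exp T).trans_le hNR
  obtain ⟨i, j, hij⟩ := hT (Real.log N - Real.log (m + 1)) (by
    rw [ge_iff_le, le_sub_iff_add_le', ← Real.log_exp T,
      ← Real.log_mul (by positivity) (by positivity)]
    exact Real.log_le_log (by positivity) hNR)
  refine ⟨i, j, div_eq_of_log_mem_Ioc hNpos (by positivity) hm ?_⟩
  push_cast
  rw [Real.log_mul (by positivity) (by positivity), Real.log_pow, Real.log_pow]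
  convert hij using 2
  ring

/-- If `r, s ≥ 2` are multiplicatively independent and `A ⊆ ℕ₀` is simultaneously
`×r`-invariant and `×s`-invariant, then `A` is finite or `A = ℕ₀`. -/
theorem stmt11 (r s : ℕ) (hr : 2 ≤ r) (hs : 2 ≤ s)
    (hind : Irrational (Real.log r / Real.log s))
    (A : Set ℕ) (hAr : TimesRInvariant r A) (hAs : TimesRInvariant s A) :
    A.Finite ∨ A = Set.univ := by
  refine or_iff_not_imp_left.2 fun hinf => eq_univ_of_forall fun m => ?_
  obtain ⟨N₀, hN₀⟩ := exists_div_pow_mul_pow_eq hr hs hind m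
  obtain ⟨N, hNA, hN⟩ := Set.Infinite.exists_gt hinf N₀
  obtain ⟨i, j, rfl⟩ := hN₀ N hN.le
  rw [← Nat.div_div_eq_div_mul]
  exact div_pow_mem_of_forall_phi_mem hAs.1 j <| div_pow_mem_of_forall_phi_mem hAr.1 i hNA
end

section
/- Let r, s ≥ 2 be multiplicatively independent integers and let A ⊆ ℕ₀ be infinite with Φ_s(A) ⊆ A. Then for every finite word w over the digits {0,…,r−1}, there exists an element of A whose base-r expansion begins with w (i.e., there exist d ∈ ℕ₀ and n₀ < r^d with (w)_r · r^d + n₀ ∈ A, where (w)_r is the integer with base-r digits w). -/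
/-- `(w)_r`: the integer whose base-`r` digits are the letters of the word `w`
(most significant digit first): `(w)_r = w₀ r^{ℓ-1} + ⋯ + w_{ℓ-1}`. -/
def wordVal (r : ℕ) (w : List ℕ) : ℕ := w.foldl (fun acc d => acc * r + d) 0

/-!
Put `W = (w)_r` and `α = log_r s`, which is irrational. A number `b` begins with `w` in base
`r` as soon as `W r^d ≤ b < (W + 1) r^d` for some `d`, which holds when `log_r (b / W)` is
nonnegative with fractional part below `δ = log_r (1 + 1/W)`. The `ℕ`-orbit of the irrational
rotation by `α` is dense in the circle, so by compactness there is a `K` such that every point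
enters the arc `(0, δ)` after at most `K` steps of `x ↦ x - α`. For `a ∈ A` with `a > W s^K`
this yields `k ≤ K` with `⌊a / s^k⌋` beginning with `w`, and `⌊a / s^k⌋ = Φ_s^k(a) ∈ A`.
-/

open Real Set

theorem exists_bound_forall_exists_sub_nsmul_mem {G : Type*} [AddGroup G] [TopologicalSpace G]
    [IsTopologicalAddGroup G] [CompactSpace G] {a : G} (ha : DenseRange fun n : ℕ => n • a)
    {U : Set G} (hU : IsOpen U) (hne : U.Nonempty) :
    ∃ K : ℕ, ∀ x : G, ∃ k ≤ K, x - k • a ∈ U := by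
  obtain ⟨u, hu⟩ := hne
  have hcover : univ ⊆ ⋃ k : ℕ, (· - k • a) ⁻¹' U := fun x _ => by
    have hopen : IsOpen ((x - ·) ⁻¹' U) := hU.preimage (continuous_sub_left x)
    obtain ⟨k, hk⟩ := ha.exists_mem_open hopen ⟨-u + x, by simpa [sub_eq_add_neg] using hu⟩
    exact mem_iUnion.2 ⟨k, hk⟩
  obtain ⟨t, ht⟩ := isCompact_univ.elim_finite_subcover _
    (fun k => hU.preimage (continuous_sub_right _)) hcover
  refine ⟨t.sup id, fun x => ?_⟩
  obtain ⟨k, hkt, hk⟩ := mem_iUnion₂.1 (ht (mem_univ x))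
  exact ⟨k, Finset.le_sup (f := id) hkt, hk⟩

theorem Irrational.exists_bound_forall_exists_fract_sub_mul_lt {α : ℝ} (hα : Irrational α)
    {δ : ℝ} (hδ : 0 < δ) : ∃ K : ℕ, ∀ x : ℝ, ∃ k ≤ K, Int.fract (x - k * α) < δ := by
  have hdense : DenseRange fun n : ℕ => n • (α : UnitAddCircle) :=
    denseRange_zsmul_iff_nsmul.1 (AddCircle.denseRange_zsmul_coe_iff.2 (by simpa using hα))
  obtain ⟨K, hK⟩ := exists_bound_forall_exists_sub_nsmul_mem hdense
    (QuotientAddGroup.isOpenMap_coe _ isOpen_Ioo) ((nonempty_Ioo.2 hδ).image _)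
  refine ⟨K, fun x => ?_⟩
  obtain ⟨k, hkK, t, ⟨ht0, htδ⟩, hxt⟩ := hK x
  have hcoe : ((x - k * α : ℝ) : UnitAddCircle) = x - k • (α : UnitAddCircle) := by
    rw [AddCircle.coe_sub, ← AddCircle.coe_nsmul, nsmul_eq_mul]
  have hfract : Int.fract t = Int.fract (x - k * α) := by
    rw [← hcoe] at hxt
    have := congrArg (fun z => (AddCircle.equivIco 1 0 z : ℝ)) hxt
    simpa only [AddCircle.coe_equivIco_mk_apply, div_one, mul_one] using this
  have hfract_le : Int.fract t ≤ t := by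
    rw [← Int.self_sub_floor]
    linarith [Int.cast_nonneg (R := ℝ) (Int.floor_nonneg.2 ht0.le)]
  exact ⟨k, hkK, by linarith⟩

theorem exists_pow_le_lt_mul_pow_of_fract_logb_lt {b t c : ℝ} (hb : 1 < b) (ht : 1 ≤ t)
    (hc : 0 < c) (h : Int.fract (logb b t) < logb b c) : ∃ d : ℕ, b ^ d ≤ t ∧ t < c * b ^ d := by
  have hlog : 0 ≤ logb b t := logb_nonneg hb ht
  refine ⟨⌊logb b t⌋₊, ?_, ?_⟩
  · rw [← rpow_natCast, ← le_logb_iff_rpow_le hb (by linarith)]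
    exact Nat.floor_le hlog
  · rw [← logb_lt_logb_iff hb (by linarith) (by positivity), logb_mul hc.ne' (by positivity),
      logb_pow, logb_self_eq_one hb]
    rw [← Int.self_sub_floor, ← Int.natCast_floor_eq_floor hlog] at h
    push_cast at h
    linarith

theorem exists_prefix_of_fract_logb_lt {r W m a : ℕ} (hr : 1 < r) (hW : 0 < W) (hm : 0 < m)
    (ha : W * m ≤ a) (h : Int.fract (logb r (a / (W * m))) < logb r ((W + 1) / W)) :
    ∃ d, ∃ n₀ < r ^ d, W * r ^ d + n₀ = a / m := by
  have hWm : (0 : ℝ) < W * m := by positivity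
  obtain ⟨d, hle, hlt⟩ := exists_pow_le_lt_mul_pow_of_fract_logb_lt (b := r)
    (by exact_mod_cast hr) ((one_le_div hWm).2 (by exact_mod_cast ha)) (by positivity) h
  rw [le_div_iff₀ hWm] at hle
  rw [div_lt_iff₀ hWm, show ((W : ℝ) + 1) / W * r ^ d * (W * m) = (W + 1) * r ^ d * m by
    field_simp] at hlt
  have hlower : W * r ^ d ≤ a / m :=
    (Nat.le_div_iff_mul_le hm).2 (by exact_mod_cast (by linarith : (W : ℝ) * r ^ d * m ≤ a))
  have hupper : a / m < W * r ^ d + r ^ d :=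
    (Nat.div_lt_iff_lt_mul hm).2 (by rw [← Nat.succ_mul]; exact_mod_cast hlt)
  exact ⟨d, a / m - W * r ^ d, by omega, Nat.add_sub_cancel' hlower⟩

theorem div_pow_mem_of_forall_div_mem {A : Set ℕ} {s : ℕ} (hA : ∀ n ∈ A, n / s ∈ A) (k : ℕ)
    {a : ℕ} (ha : a ∈ A) : a / s ^ k ∈ A := by
  induction k with
  | zero => simpa using ha
  | succ k ih => simpa [pow_succ, Nat.div_div_eq_div_mul] using hA _ ih

theorem stmt12_general (r s : ℕ) (hr : 2 ≤ r) (hs : 2 ≤ s)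
    (hind : Irrational (Real.log r / Real.log s))
    (A : Set ℕ) (hA : A.Infinite) (hPhi : ∀ n ∈ A, n / s ∈ A)
    (w : List ℕ) :
    ∃ d n₀ : ℕ, n₀ < r ^ d ∧ wordVal r w * r ^ d + n₀ ∈ A := by
  set W := wordVal r w
  rcases Nat.eq_zero_or_pos W with hW | hW
  · obtain ⟨a, ha⟩ := hA.nonempty
    exact ⟨a, a, Nat.lt_pow_self hr, by simpa [hW] using ha⟩
  have hr' : (1 : ℝ) < r := by exact_mod_cast hr
  have hα : Irrational (logb r s) := by simpa [logb, inv_div] using hind.inv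
  obtain ⟨K, hK⟩ := hα.exists_bound_forall_exists_fract_sub_mul_lt
    (logb_pos hr' ((one_lt_div (by positivity)).2 (lt_add_one (W : ℝ))))
  obtain ⟨a, haA, haK⟩ := hA.exists_gt (W * s ^ K)
  obtain ⟨k, hkK, hk⟩ := hK (logb r a - logb r W)
  have hsk : W * s ^ k ≤ a :=
    (Nat.mul_le_mul_left W (Nat.pow_le_pow_right (n := s) (by omega) hkK)).trans haK.le
  have hlogb : logb r (a / (W * (s ^ k : ℕ))) = logb r a - logb r W - k * logb r s := by
    have hsk0 : ((s ^ k : ℕ) : ℝ) ≠ 0 := by positivity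
    have ha0 : (a : ℝ) ≠ 0 := Nat.cast_ne_zero.2 (by omega)
    rw [logb_div ha0 (by positivity), logb_mul (by positivity) hsk0, Nat.cast_pow, logb_pow]
    ring
  obtain ⟨d, n₀, hn₀, hd⟩ :=
    exists_prefix_of_fract_logb_lt (r := r) (by omega) hW (by positivity) hsk (by rwa [hlogb])
  exact ⟨d, n₀, hn₀, hd ▸ div_pow_mem_of_forall_div_mem hPhi k haA⟩

/-- If `r, s ≥ 2` are multiplicatively independent and `A ⊆ ℕ₀` is infinite with
`Φ_s(A) ⊆ A`, then for every word `w` over `{0,…,r-1}` there is an element of `A` whose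
base-`r` expansion begins with `w`. -/
theorem stmt12 (r s : ℕ) (hr : 2 ≤ r) (hs : 2 ≤ s)
    (hind : Irrational (Real.log r / Real.log s))
    (A : Set ℕ) (hA : A.Infinite) (hPhi : ∀ n ∈ A, n / s ∈ A)
    (w : List ℕ) (hw : ∀ d ∈ w, d < r) :
    ∃ d n₀ : ℕ, n₀ < r ^ d ∧ wordVal r w * r ^ d + n₀ ∈ A :=
  stmt12_general r s hr hs hind A hA hPhi w
end

section
/- For subsets A, B ⊆ ℕ₀, the upper mass dimension is subadditive under sumsets: upper-dim_M(A + B) ≤ upper-dim_M(A) + upper-dim_M(B), where A + B = {a + b : a ∈ A, b ∈ B}. -/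
open Filter Pointwise

/-- The upper mass dimension of `A ⊆ ℕ₀`: `limsup_{N→∞} log|A ∩ [0,N)| / log N`. -/
noncomputable def upperMassDim (A : Set ℕ) : ℝ :=
  limsup (fun N : ℕ => Real.log (({n ∈ A | n < N}).ncard : ℝ) / Real.log N) atTop

private lemma seg_finite (A : Set ℕ) (N : ℕ) : ({n ∈ A | n < N}).Finite :=
  (Set.finite_Iio N).subset fun _ hn => hn.2

private lemma log_nat_mono {m n : ℕ} (h : m ≤ n) : Real.log m ≤ Real.log n := by
  rcases Nat.eq_zero_or_pos m with rfl | hm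
  · simpa using Real.log_natCast_nonneg n
  · exact Real.log_le_log (by exact_mod_cast hm) (by exact_mod_cast h)

private lemma seg_card_le (A : Set ℕ) (N : ℕ) : ({n ∈ A | n < N}).ncard ≤ N := by
  calc ({n ∈ A | n < N}).ncard ≤ (Set.Iio N).ncard :=
        Set.ncard_le_ncard (fun n hn => hn.2) (Set.finite_Iio N)
    _ ≤ N := by simp [Nat.card_coe_set_eq, Set.ncard_eq_toFinset_card']

/-- Upper bound 1 for the dimension sequence. -/
private lemma seq_le_one (A : Set ℕ) (N : ℕ) :
    Real.log (({n ∈ A | n < N}).ncard : ℝ) / Real.log N ≤ 1 := by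
  rcases le_or_gt N 1 with hN | hN
  · have h1 : Real.log (({n ∈ A | n < N}).ncard : ℝ) ≤ 0 := by
      apply Real.log_nonpos (by positivity)
      exact_mod_cast (seg_card_le A N).trans hN
    rcases le_or_gt (Real.log N) 0 with h | h
    · interval_cases N <;> simp
    · exact le_trans (div_nonpos_of_nonpos_of_nonneg h1 h.le) zero_le_one
  · have hlogN : 0 < Real.log N := Real.log_pos (by exact_mod_cast hN)
    rw [div_le_one hlogN]
    exact log_nat_mono (seg_card_le A N)

/-- Eventually nonneg. -/
private lemma seq_event_nonneg (A : Set ℕ) (hA : A.Nonempty) :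
    ∀ᶠ N : ℕ in atTop, 0 ≤ Real.log (({n ∈ A | n < N}).ncard : ℝ) / Real.log N := by
  obtain ⟨a, ha⟩ := hA
  filter_upwards [eventually_gt_atTop (max a 1)] with N hN
  have hlogN : 0 < Real.log N :=
    Real.log_pos (by exact_mod_cast lt_of_le_of_lt (le_max_right a 1) hN)
  apply div_nonneg _ hlogN.le
  apply Real.log_nonneg
  have : 0 < ({n ∈ A | n < N}).ncard :=
    (Set.ncard_pos (seg_finite A N)).2 ⟨a, ha, lt_of_le_of_lt (le_max_left a 1) hN⟩
  exact_mod_cast this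

/-- The upper mass dimension is subadditive under sumsets:
`dim_M-upper(A+B) ≤ dim_M-upper(A) + dim_M-upper(B)`. -/
theorem stmt14 (A B : Set ℕ) (hA : A.Nonempty) (hB : B.Nonempty) :
    upperMassDim (A + B) ≤ upperMassDim A + upperMassDim B := by
  obtain ⟨a, ha⟩ := hA
  obtain ⟨b, hb⟩ := hB
  set fA : ℕ → ℝ := fun N => Real.log (({n ∈ A | n < N}).ncard : ℝ) / Real.log N with hfA
  set fB : ℕ → ℝ := fun N => Real.log (({n ∈ B | n < N}).ncard : ℝ) / Real.log N with hfB
  set fC : ℕ → ℝ := fun N => Real.log (({n ∈ A + B | n < N}).ncard : ℝ) / Real.log N with hfC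
  have hbddA : IsBoundedUnder (· ≤ ·) atTop fA :=
    isBoundedUnder_of ⟨1, fun N => seq_le_one A N⟩
  have hbddB : IsBoundedUnder (· ≤ ·) atTop fB :=
    isBoundedUnder_of ⟨1, fun N => seq_le_one B N⟩
  have hgeA : IsBoundedUnder (· ≥ ·) atTop fA := ⟨0, by
    rw [eventually_map]; exact seq_event_nonneg A ⟨a, ha⟩⟩
  have hgeB : IsBoundedUnder (· ≥ ·) atTop fB := ⟨0, by
    rw [eventually_map]; exact seq_event_nonneg B ⟨b, hb⟩⟩
  have hcoB : IsCoboundedUnder (· ≤ ·) atTop fB := hgeB.isCoboundedUnder_le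
  have hgeC : IsBoundedUnder (· ≥ ·) atTop fC := ⟨0, by
    rw [eventually_map]; exact seq_event_nonneg (A + B) ⟨a + b, Set.add_mem_add ha hb⟩⟩
  have hcoC : IsCoboundedUnder (· ≤ ·) atTop fC := hgeC.isCoboundedUnder_le
  have key : ∀ᶠ N : ℕ in atTop, fC N ≤ fA N + fB N := by
    filter_upwards [eventually_gt_atTop (max (max a b) 1)] with N hN
    have hN1 : 1 < N := lt_of_le_of_lt (le_max_right _ 1) hN
    have haN : a < N := lt_of_le_of_lt ((le_max_left a b).trans (le_max_left _ 1)) hN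
    have hbN : b < N := lt_of_le_of_lt ((le_max_right a b).trans (le_max_left _ 1)) hN
    have hlogN : 0 < Real.log N := Real.log_pos (by exact_mod_cast hN1)
    have hAne : 0 < ({n ∈ A | n < N}).ncard :=
      (Set.ncard_pos (seg_finite A N)).2 ⟨a, ha, haN⟩
    have hBne : 0 < ({n ∈ B | n < N}).ncard :=
      (Set.ncard_pos (seg_finite B N)).2 ⟨b, hb, hbN⟩
    have hsub : {n ∈ A + B | n < N} ⊆ {n ∈ A | n < N} + {n ∈ B | n < N} := by
      rintro n ⟨⟨x, hx, y, hy, rfl⟩, hn⟩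
      exact Set.add_mem_add ⟨hx, lt_of_le_of_lt (Nat.le_add_right x y) hn⟩
        ⟨hy, lt_of_le_of_lt (Nat.le_add_left y x) hn⟩
    have hcard : ({n ∈ A + B | n < N}).ncard ≤
        ({n ∈ A | n < N}).ncard * ({n ∈ B | n < N}).ncard := by
      calc ({n ∈ A + B | n < N}).ncard
          ≤ ({n ∈ A | n < N} + {n ∈ B | n < N}).ncard :=
            Set.ncard_le_ncard hsub ((seg_finite A N).add (seg_finite B N))
        _ ≤ ({n ∈ A | n < N}).ncard * ({n ∈ B | n < N}).ncard := by
            simpa [Nat.card_coe_set_eq] using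
              (Set.natCard_add_le (s := {n ∈ A | n < N}) (t := {n ∈ B | n < N}))
    have hlog : Real.log (({n ∈ A + B | n < N}).ncard : ℝ) ≤
        Real.log (({n ∈ A | n < N}).ncard : ℝ) + Real.log (({n ∈ B | n < N}).ncard : ℝ) := by
      rw [← Real.log_mul (by exact_mod_cast hAne.ne') (by exact_mod_cast hBne.ne')]
      have := log_nat_mono hcard
      push_cast at this ⊢
      exact this
    calc fC N = Real.log (({n ∈ A + B | n < N}).ncard : ℝ) / Real.log N := rfl
      _ ≤ (Real.log (({n ∈ A | n < N}).ncard : ℝ) +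
            Real.log (({n ∈ B | n < N}).ncard : ℝ)) / Real.log N := by
          exact div_le_div_of_nonneg_right hlog hlogN.le
      _ = fA N + fB N := add_div _ _ _
  have h1 : limsup fC atTop ≤ limsup (fA + fB) atTop := by
    refine limsup_le_limsup key hcoC ?_
    exact isBoundedUnder_of ⟨2, fun N => by
      have h1 := seq_le_one A N; have h2 := seq_le_one B N
      simpa [fA, fB] using by linarith⟩
  have h2 : limsup (fA + fB) atTop ≤ limsup fA atTop + limsup fB atTop :=
    limsup_add_le hgeA hbddA hcoB hbddB
  calc upperMassDim (A + B) = limsup fC atTop := rfl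
    _ ≤ limsup (fA + fB) atTop := h1
    _ ≤ limsup fA atTop + limsup fB atTop := h2
    _ = upperMassDim A + upperMassDim B := rfl
end

section
/- For every A ⊆ ℕ₀, the lower discrete Hausdorff dimension is at most the lower mass dimension, and the upper discrete Hausdorff dimension is at most the upper mass dimension: dim_H-lower(A) ≤ dim_M-lower(A) and dim_H-upper(A) ≤ dim_M-upper(A). -/
open Filter

/-- The lower mass dimension of `A ⊆ ℕ₀`. -/
noncomputable def lowerMassDim (A : Set ℕ) : ℝ :=
  liminf (fun N : ℕ => Real.log (({n ∈ A | n < N}).ncard : ℝ) / Real.log N) atTop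

/-- The lower discrete Hausdorff dimension of `A ⊆ ℕ₀`:
`sup{γ ≥ 0 : liminf_N H^γ_{≥1}(A ∩ [0,N)) / N^γ > 0}`. -/
noncomputable def lowerHausDim (A : Set ℕ) : ℝ :=
  sSup {γ : ℝ | 0 ≤ γ ∧ 0 < liminf (fun N : ℕ =>
    discreteHausdorffContent 1 γ ((fun n : ℕ => (n : ℝ)) '' {m ∈ A | m < N}) /
      ENNReal.ofReal ((N : ℝ) ^ γ)) atTop}

/-- The upper discrete Hausdorff dimension of `A ⊆ ℕ₀`. -/
noncomputable def upperHausDim (A : Set ℕ) : ℝ :=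
  sSup {γ : ℝ | 0 ≤ γ ∧ 0 < limsup (fun N : ℕ =>
    discreteHausdorffContent 1 γ ((fun n : ℕ => (n : ℝ)) '' {m ∈ A | m < N}) /
      ENNReal.ofReal ((N : ℝ) ^ γ)) atTop}

/-!
If the discrete Hausdorff content of `A ∩ [0, N)` is at least `c N^γ`, then so is `|A ∩ [0, N)|`,
since covering every point by its own ball of diameter `1` costs exactly `|A ∩ [0, N)|`. Taking
logarithms, `log |A ∩ [0, N)| / log N ≥ γ + log c / log N`, and `log c / log N → 0`.
-/

theorem discreteHausdorffContent_le_ncard_mul {α : Type*} [PseudoMetricSpace α] {ρ : ℝ}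
    (hρ : 0 < ρ) (γ : ℝ) {X : Set α} (hX : X.Finite) :
    discreteHausdorffContent ρ γ X ≤ X.ncard * ENNReal.ofReal (ρ ^ γ) := by
  let s : Set (α × ℝ) := (fun x => (x, ρ)) '' X
  have hinj : Function.Injective fun x : α => (x, ρ) := fun x y h => congrArg Prod.fst h
  have hcover : X ⊆ ⋃ p ∈ s, Metric.ball p.1 (p.2 / 2) := fun x hx =>
    Set.mem_biUnion (Set.mem_image_of_mem _ hx) (Metric.mem_ball_self (half_pos hρ))
  refine iInf₂_le_of_le s (hX.image _).countable <| iInf₂_le_of_le (by simp [s]) hcover ?_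
  have hconst : ∀ p : s, ENNReal.ofReal ((p : α × ℝ).2 ^ γ) = ENNReal.ofReal (ρ ^ γ) := by
    rintro ⟨_, x, -, rfl⟩
    rfl
  rw [tsum_congr hconst, ENNReal.tsum_const, ← Set.encard, ← (hX.image _).cast_ncard_eq,
    Set.ncard_image_of_injective X hinj]
  rfl

theorem Real.add_log_div_log_le_of_mul_rpow_le {c N γ k : ℝ} (hc : 0 < c) (hN : 1 < N)
    (h : c * N ^ γ ≤ k) : γ + Real.log c / Real.log N ≤ Real.log k / Real.log N := by
  have hlogN : 0 < Real.log N := Real.log_pos hN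
  have hNγ : 0 < N ^ γ := Real.rpow_pos_of_pos (by linarith) γ
  have hlog : Real.log c + γ * Real.log N ≤ Real.log k := by
    rw [← Real.log_rpow (by linarith), ← Real.log_mul hc.ne' hNγ.ne']
    exact Real.log_le_log (mul_pos hc hNγ) h
  rw [le_div_iff₀ hlogN, add_mul, div_mul_cancel₀ _ hlogN.ne']
  linarith

namespace DiscreteDimension

noncomputable def massRatio (A : Set ℕ) (N : ℕ) : ℝ :=
  Real.log (({n ∈ A | n < N}).ncard : ℝ) / Real.log N

noncomputable def hausdorffRatio (A : Set ℕ) (γ : ℝ) (N : ℕ) : ENNReal :=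
  discreteHausdorffContent 1 γ ((fun n : ℕ => (n : ℝ)) '' {m ∈ A | m < N}) /
    ENNReal.ofReal ((N : ℝ) ^ γ)

variable (A : Set ℕ)

theorem ncard_sep_lt_le (N : ℕ) : ({n ∈ A | n < N}).ncard ≤ N :=
  (Set.ncard_le_ncard (fun _ hn => hn.2) (Set.finite_Iio N)).trans (Set.ncard_Iio_nat N).le

theorem massRatio_nonneg (N : ℕ) : 0 ≤ massRatio A N :=
  div_nonneg (Real.log_natCast_nonneg _) (Real.log_natCast_nonneg _)

theorem massRatio_le_one (N : ℕ) : massRatio A N ≤ 1 := by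
  rcases le_or_gt N 1 with hN | hN
  · interval_cases N <;> simp [massRatio]
  have hlogN : 0 < Real.log N := Real.log_pos (by exact_mod_cast hN)
  rw [massRatio, div_le_one hlogN]
  rcases Nat.eq_zero_or_pos ({n ∈ A | n < N}).ncard with h0 | h0
  · simpa [h0] using hlogN.le
  · exact Real.log_le_log (by exact_mod_cast h0) (by exact_mod_cast ncard_sep_lt_le A N)

theorem isBoundedUnder_massRatio : IsBoundedUnder (· ≤ ·) atTop (massRatio A) :=
  isBoundedUnder_of ⟨1, massRatio_le_one A⟩

theorem lowerHausDim_eq_sSup : lowerHausDim A =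
    sSup {γ : ℝ | 0 ≤ γ ∧ 0 < liminf (hausdorffRatio A γ) atTop} := rfl

theorem upperHausDim_eq_sSup : upperHausDim A =
    sSup {γ : ℝ | 0 ≤ γ ∧ 0 < limsup (hausdorffRatio A γ) atTop} := rfl

theorem lowerMassDim_nonneg : 0 ≤ lowerMassDim A :=
  le_liminf_of_le (isBoundedUnder_massRatio A).isCoboundedUnder_ge
    (Eventually.of_forall (massRatio_nonneg A))

theorem upperMassDim_nonneg : 0 ≤ upperMassDim A :=
  le_limsup_of_frequently_le (Frequently.of_forall (massRatio_nonneg A))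
    (isBoundedUnder_massRatio A)

theorem add_log_div_log_le_massRatio {γ : ℝ} {c : NNReal} (hc : 0 < c) {N : ℕ} (hN : 1 < N)
    (hcN : (c : ENNReal) < hausdorffRatio A γ N) :
    γ + Real.log c / Real.log N ≤ massRatio A N := by
  have hNγ : 0 < (N : ℝ) ^ γ := Real.rpow_pos_of_pos (by positivity) γ
  have hcontent : (c : ENNReal) * ENNReal.ofReal ((N : ℝ) ^ γ) ≤ ({n ∈ A | n < N}).ncard := by
    refine (ENNReal.mul_le_of_le_div hcN.le).trans ?_
    have hfin : ({n ∈ A | n < N}).Finite := (Set.finite_Iio N).subset fun _ hn => hn.2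
    simpa [Set.ncard_image_of_injective _ Nat.cast_injective] using
      discreteHausdorffContent_le_ncard_mul one_pos γ (hfin.image ((↑) : ℕ → ℝ))
  have hreal : (c : ℝ) * (N : ℝ) ^ γ ≤ ({n ∈ A | n < N}).ncard := by
    have := ENNReal.toReal_mono (ENNReal.natCast_ne_top _) hcontent
    rwa [ENNReal.toReal_mul, ENNReal.toReal_ofReal hNγ.le, ENNReal.toReal_natCast,
      ENNReal.coe_toReal] at this
  exact Real.add_log_div_log_le_of_mul_rpow_le hc (by exact_mod_cast hN) hreal

theorem eventually_sub_le_massRatio (γ : ℝ) {c : NNReal} (hc : 0 < c) {ε : ℝ} (hε : 0 < ε) :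
    ∀ᶠ N in atTop, (c : ENNReal) < hausdorffRatio A γ N → γ - ε ≤ massRatio A N := by
  have hvanish : Tendsto (fun N : ℕ => Real.log c / Real.log N) atTop (nhds 0) :=
    tendsto_const_nhds.div_atTop (Real.tendsto_log_atTop.comp tendsto_natCast_atTop_atTop)
  filter_upwards [eventually_gt_atTop 1, hvanish.eventually (eventually_ge_nhds (neg_lt_zero.2 hε))]
    with N hN hsmall hcN
  linarith [add_log_div_log_le_massRatio A hc hN hcN]

theorem lowerHausDim_le_lowerMassDim : lowerHausDim A ≤ lowerMassDim A := by
  rw [lowerHausDim_eq_sSup]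
  refine Real.sSup_le (fun γ ⟨_, hpos⟩ => le_of_forall_sub_le fun ε hε => ?_)
    (lowerMassDim_nonneg A)
  obtain ⟨c, hc, hcL⟩ := ENNReal.lt_iff_exists_nnreal_btwn.1 hpos
  refine le_liminf_of_le (isBoundedUnder_massRatio A).isCoboundedUnder_ge ?_
  filter_upwards [eventually_lt_of_lt_liminf hcL,
    eventually_sub_le_massRatio A γ (ENNReal.coe_pos.1 hc) hε] with N hcN hle
  exact hle hcN

theorem upperHausDim_le_upperMassDim : upperHausDim A ≤ upperMassDim A := by
  rw [upperHausDim_eq_sSup]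
  refine Real.sSup_le (fun γ ⟨_, hpos⟩ => le_of_forall_sub_le fun ε hε => ?_)
    (upperMassDim_nonneg A)
  obtain ⟨c, hc, hcL⟩ := ENNReal.lt_iff_exists_nnreal_btwn.1 hpos
  refine le_limsup_of_frequently_le ?_ (isBoundedUnder_massRatio A)
  exact ((frequently_lt_of_lt_limsup (by isBoundedDefault) hcL).and_eventually
    (eventually_sub_le_massRatio A γ (ENNReal.coe_pos.1 hc) hε)).mono fun _ h => h.2 h.1

end DiscreteDimension

/-- For every `A ⊆ ℕ₀`, the lower (resp. upper) discrete Hausdorff dimension is at most the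
lower (resp. upper) mass dimension. -/
theorem stmt15 (A : Set ℕ) :
    lowerHausDim A ≤ lowerMassDim A ∧ upperHausDim A ≤ upperMassDim A :=
  ⟨DiscreteDimension.lowerHausDim_le_lowerMassDim A,
    DiscreteDimension.upperHausDim_le_upperMassDim A⟩
end

section
/- Let A ⊆ ℕ₀ satisfy Φ_r(A) ⊆ A and define X_k := (A ∩ [0, r^k)) / r^k ⊆ [0,1]. Then for all l ≥ k ≥ 1, X_l is contained in the closed r^{−k}-neighborhood of X_k. If moreover A ⊆ Φ_r(A), then X_k is contained in the closed r^{−k}-neighborhood of X_l. In particular, if Φ_r(A) = A, then the Hausdorff distance satisfies d_H(X_l, X_k) ≤ r^{−k} for all l ≥ k, so (X_k) is Cauchy in the Hausdorff metric. -/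
/-!
The point `n / r^(k+j)` of `X_(k+j)` lies within `r^(-k)` of its truncation `⌊n / r^j⌋ / r^k`,
which is a point of `X_k` because `A` is closed under `Φ_r`. Conversely, if every element of
`A` has a `Φ_r`-preimage in `A`, then every point of `X_k` is such a truncation.
-/

/-- `X_k = (A ∩ [0, r^k)) / r^k ⊆ [0,1]`. -/
def rescaled (r : ℕ) (A : Set ℕ) (k : ℕ) : Set ℝ :=
  (fun n : ℕ => (n : ℝ) / (r : ℝ) ^ k) '' {n ∈ A | n < r ^ k}

theorem Nat.abs_div_pow_add_sub_le (r k j n : ℕ) :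
    |(n : ℝ) / (r : ℝ) ^ (k + j) - ((n / r ^ j : ℕ) : ℝ) / (r : ℝ) ^ k| ≤ ((r : ℝ) ^ k)⁻¹ := by
  set q : ℝ := (n : ℝ) / (r ^ j : ℕ)
  have hfloor : ⌊q⌋₊ = n / r ^ j := Nat.floor_div_eq_div n (r ^ j)
  have hfrac : |q - ⌊q⌋₊| ≤ 1 := by
    rw [abs_of_nonneg (sub_nonneg.2 (Nat.floor_le (by positivity)))]
    linarith [Nat.lt_floor_add_one q]
  have hscale : (n : ℝ) / (r : ℝ) ^ (k + j) - ((n / r ^ j : ℕ) : ℝ) / (r : ℝ) ^ k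
      = (q - ⌊q⌋₊) / (r : ℝ) ^ k := by
    rw [hfloor, sub_div, pow_add, mul_comm, ← div_div]
    push_cast [q]
    rfl
  calc |(n : ℝ) / (r : ℝ) ^ (k + j) - ((n / r ^ j : ℕ) : ℝ) / (r : ℝ) ^ k|
      = |q - ⌊q⌋₊| / (r : ℝ) ^ k := by
        rw [hscale, abs_div, abs_of_nonneg (a := (r : ℝ) ^ k) (by positivity)]
    _ ≤ ((r : ℝ) ^ k)⁻¹ := by rw [inv_eq_one_div]; gcongr

theorem Nat.iterate_div_eq_div_pow (r j : ℕ) : (· / r)^[j] = (· / r ^ j) := by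
  induction j with
  | zero => ext n; simp
  | succ j ih =>
    ext n
    rw [Function.iterate_succ_apply', ih, Nat.div_div_eq_div_mul, pow_succ]

section rescaled

open Set

variable {r : ℕ} {A : Set ℕ} {k l : ℕ}

theorem exists_mem_rescaled_abs_sub_le_of_mapsTo (hr : 0 < r) (hA : MapsTo (· / r) A A)
    (hkl : k ≤ l) : ∀ y ∈ rescaled r A l, ∃ x ∈ rescaled r A k, |y - x| ≤ ((r : ℝ) ^ k)⁻¹ := by
  obtain ⟨j, rfl⟩ := Nat.exists_eq_add_of_le hkl
  rintro _ ⟨n, ⟨hnA, hn⟩, rfl⟩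
  refine ⟨_, ⟨n / r ^ j, ⟨?_, ?_⟩, rfl⟩, Nat.abs_div_pow_add_sub_le r k j n⟩
  · exact (Nat.iterate_div_eq_div_pow r j ▸ hA.iterate j) hnA
  · rwa [Nat.div_lt_iff_lt_mul (by positivity), ← pow_add]

theorem exists_mem_rescaled_abs_sub_le_of_surjOn (hr : 0 < r) (hA : SurjOn (· / r) A A)
    (hkl : k ≤ l) : ∀ x ∈ rescaled r A k, ∃ y ∈ rescaled r A l, |x - y| ≤ ((r : ℝ) ^ k)⁻¹ := by
  obtain ⟨j, rfl⟩ := Nat.exists_eq_add_of_le hkl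
  rintro _ ⟨m, ⟨hmA, hm⟩, rfl⟩
  obtain ⟨n, hnA, rfl⟩ := (Nat.iterate_div_eq_div_pow r j ▸ hA.iterate j) hmA
  refine ⟨_, ⟨n, ⟨hnA, ?_⟩, rfl⟩, abs_sub_comm (α := ℝ) .. ▸ Nat.abs_div_pow_add_sub_le r k j n⟩
  rwa [Nat.div_lt_iff_lt_mul (by positivity), ← pow_add] at hm

end rescaled

/-- If `Φ_r(A) ⊆ A` then for `l ≥ k ≥ 1`, `X_l` lies in the closed `r^{-k}`-neighborhood of
`X_k`; if moreover `A ⊆ Φ_r(A)` then `X_k` lies in the closed `r^{-k}`-neighborhood of `X_l`;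
in particular if `Φ_r(A) = A` then `d_H(X_l, X_k) ≤ r^{-k}` for all `l ≥ k ≥ 1`. -/
theorem stmt16 (r : ℕ) (hr : 2 ≤ r) (A : Set ℕ) (hPhi : ∀ n ∈ A, n / r ∈ A) :
    (∀ k l : ℕ, 1 ≤ k → k ≤ l →
      ∀ y ∈ rescaled r A l, ∃ x ∈ rescaled r A k, |y - x| ≤ ((r : ℝ) ^ k)⁻¹) ∧
    ((∀ n ∈ A, ∃ m ∈ A, m / r = n) → ∀ k l : ℕ, 1 ≤ k → k ≤ l →
      ∀ x ∈ rescaled r A k, ∃ y ∈ rescaled r A l, |x - y| ≤ ((r : ℝ) ^ k)⁻¹) ∧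
    ((fun n : ℕ => n / r) '' A = A → ∀ k l : ℕ, 1 ≤ k → k ≤ l →
      Metric.hausdorffDist (rescaled r A l) (rescaled r A k) ≤ ((r : ℝ) ^ k)⁻¹) := by
  have hr₀ : 0 < r := by omega
  refine ⟨fun k l _ hkl => exists_mem_rescaled_abs_sub_le_of_mapsTo hr₀ hPhi hkl,
    fun hsurj k l _ hkl => exists_mem_rescaled_abs_sub_le_of_surjOn hr₀ hsurj hkl,
    fun hfix k l _ hkl => ?_⟩
  exact Metric.hausdorffDist_le_of_mem_dist (by positivity)
    (exists_mem_rescaled_abs_sub_le_of_mapsTo hr₀ hPhi hkl)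
    (exists_mem_rescaled_abs_sub_le_of_surjOn hr₀ hfix.symm.subset hkl)
end

section
/- If A ⊆ ℕ₀ is ×r-invariant and its (upper) mass dimension equals 1, then A = ℕ₀. -/
open Filter

/-!
If some `m` is missing from a `×r`-invariant set `A`, pick `L` with `m < b := r ^ L`. Every base-`b`
digit of an element of `A` is a block of `L` base-`r` digits, which can be cut out by deleting
digits on both sides, so it lies in `A` and differs from `m`. Hence `A ∩ [0, b ^ Q)` has at most
`(b - 1) ^ Q` elements, and the upper mass dimension of `A` is at most `log (b - 1) / log b < 1`.
-/

namespace TimesRInvariant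

variable {r : ℕ} {A : Set ℕ}

theorem div_pow_mem (hA : TimesRInvariant r A) {n : ℕ} (hn : n ∈ A) (k : ℕ) :
    n / r ^ k ∈ A := by
  induction k with
  | zero => simpa using hn
  | succ k ih => simpa [Phi, Nat.div_div_eq_div_mul, pow_succ] using hA.1 _ ih

theorem mod_pow_mem (hr : 1 < r) (hA : TimesRInvariant r A) {n : ℕ} (hn : n ∈ A) (j : ℕ) :
    n % r ^ j ∈ A := by
  induction n using Nat.strong_induction_on with
  | _ n ih =>
    rcases lt_or_ge n (r ^ j) with hlt | hle
    · rwa [Nat.mod_eq_of_lt hlt]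
    have hn0 : n ≠ 0 := ((pow_pos (by omega) j).trans_le hle).ne'
    have hjL : j ≤ Nat.log r n := Nat.le_log_of_pow_le hr hle
    have hPsi_lt : Psi r n < n :=
      (Nat.mod_lt _ (pow_pos (by omega) _)).trans_le (Nat.pow_log_le_self r hn0)
    have := ih _ hPsi_lt (hA.2 n hn)
    rwa [Psi, Nat.mod_mod_of_dvd _ (pow_dvd_pow r hjL)] at this

theorem digit_mem (hr : 1 < r) (hA : TimesRInvariant r A) {n : ℕ} (hn : n ∈ A) (L k : ℕ) :
    n / (r ^ L) ^ k % r ^ L ∈ A := by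
  rw [← pow_mul]
  exact hA.mod_pow_mem hr (hA.div_pow_mem hn _) L

end TimesRInvariant

def digitAvoiding (b m Q : ℕ) : Finset ℕ :=
  (Finset.range (b ^ Q)).filter fun n => ∀ k < Q, n / b ^ k % b ≠ m

theorem card_digitAvoiding_le {b m : ℕ} (hm : m < b) (Q : ℕ) :
    (digitAvoiding b m Q).card ≤ (b - 1) ^ Q := by
  induction Q with
  | zero => simp [digitAvoiding]
  | succ Q ih =>
    have hb : 0 < b := by omega
    have hmaps : ∀ n ∈ digitAvoiding b m (Q + 1),
        (n % b, n / b) ∈ (Finset.range b).erase m ×ˢ digitAvoiding b m Q := by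
      intro n hn
      simp only [digitAvoiding, Finset.mem_filter, Finset.mem_range] at hn
      obtain ⟨hlt, hdigits⟩ := hn
      simp only [digitAvoiding, Finset.mem_product, Finset.mem_erase, Finset.mem_filter,
        Finset.mem_range]
      refine ⟨⟨by simpa using hdigits 0 Q.succ_pos, Nat.mod_lt _ hb⟩,
        Nat.div_lt_of_lt_mul (by rwa [← pow_succ']), fun k hk => ?_⟩
      simpa [Nat.div_div_eq_div_mul, ← pow_succ'] using hdigits (k + 1) (by omega)
    have hinj : Set.InjOn (fun n => (n % b, n / b)) (digitAvoiding b m (Q + 1)) := by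
      intro x _ y _ hxy
      simp only [Prod.mk.injEq] at hxy
      rw [← Nat.div_add_mod x b, ← Nat.div_add_mod y b, hxy.1, hxy.2]
    calc (digitAvoiding b m (Q + 1)).card
        ≤ ((Finset.range b).erase m ×ˢ digitAvoiding b m Q).card :=
          Finset.card_le_card_of_injOn _ hmaps hinj
      _ ≤ (b - 1) * (b - 1) ^ Q := by
          rw [Finset.card_product, Finset.card_erase_of_mem (Finset.mem_range.2 hm),
            Finset.card_range]
          exact Nat.mul_le_mul_left _ ih
      _ = (b - 1) ^ (Q + 1) := (pow_succ' _ _).symm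

theorem TimesRInvariant.ncard_lt_pow_le {r L m : ℕ} {A : Set ℕ} (hr : 1 < r)
    (hA : TimesRInvariant r A) (hm : m ∉ A) (hmL : m < r ^ L) (Q : ℕ) :
    {n ∈ A | n < (r ^ L) ^ Q}.ncard ≤ (r ^ L - 1) ^ Q := by
  have hsub : {n ∈ A | n < (r ^ L) ^ Q} ⊆ digitAvoiding (r ^ L) m Q := by
    rintro n ⟨hnA, hnQ⟩
    simp only [digitAvoiding, Finset.coe_filter, Finset.mem_range, Set.mem_ofPred_eq]
    exact ⟨hnQ, fun k _ hdigit => hm (hdigit ▸ hA.digit_mem hr hnA L k)⟩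
  calc {n ∈ A | n < (r ^ L) ^ Q}.ncard ≤ (digitAvoiding (r ^ L) m Q : Set ℕ).ncard :=
        Set.ncard_le_ncard hsub (Finset.finite_toSet _)
    _ ≤ (r ^ L - 1) ^ Q := by
        rw [Set.ncard_coe_finset]
        exact card_digitAvoiding_le hmL Q

section MassDimension

variable {A : Set ℕ} {a b : ℕ}

theorem log_ncard_div_log_le (hb : 1 < b) (hcard : ∀ Q, {n ∈ A | n < b ^ Q}.ncard ≤ a ^ Q)
    {N : ℕ} (hN : b ≤ N) :
    Real.log ({n ∈ A | n < N}.ncard : ℝ) / Real.log N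
      ≤ Real.log a / Real.log b * (1 + (Nat.log b N : ℝ)⁻¹) := by
  set P := Nat.log b N
  have hP : 0 < P := Nat.log_pos hb hN
  have hlogb : 0 < Real.log b := Real.log_pos (by exact_mod_cast hb)
  have hcardN : {n ∈ A | n < N}.ncard ≤ a ^ (P + 1) := by
    refine le_trans (Set.ncard_le_ncard ?_ ((Set.finite_lt_nat _).subset fun n hn => hn.2))
      (hcard _)
    exact fun n ⟨hnA, hnN⟩ => ⟨hnA, hnN.trans (Nat.lt_pow_succ_log_self hb N)⟩
  have hnum : Real.log ({n ∈ A | n < N}.ncard : ℝ) ≤ (P + 1) * Real.log a := by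
    rcases Nat.eq_zero_or_pos {n ∈ A | n < N}.ncard with h0 | hpos
    · rw [h0, Nat.cast_zero, Real.log_zero]
      exact mul_nonneg (by positivity) (Real.log_natCast_nonneg a)
    · rw [← Nat.cast_succ, ← Real.log_pow, ← Nat.cast_pow]
      exact Real.log_le_log (by exact_mod_cast hpos) (by exact_mod_cast hcardN)
  have hden : P * Real.log b ≤ Real.log N := by
    rw [← Real.log_pow, ← Nat.cast_pow]
    exact Real.log_le_log (by positivity) (by exact_mod_cast Nat.pow_log_le_self b (by omega))
  calc Real.log ({n ∈ A | n < N}.ncard : ℝ) / Real.log N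
      ≤ (P + 1) * Real.log a / (P * Real.log b) :=
        div_le_div₀ (by positivity) hnum (by positivity) hden
    _ = Real.log a / Real.log b * (1 + (P : ℝ)⁻¹) := by
        field_simp

theorem upperMassDim_le_of_ncard_le (hb : 1 < b)
    (hcard : ∀ Q, {n ∈ A | n < b ^ Q}.ncard ≤ a ^ Q) :
    upperMassDim A ≤ Real.log a / Real.log b := by
  have hlog : Tendsto (Nat.log b) atTop atTop :=
    tendsto_atTop_atTop.2 fun P => ⟨b ^ P, fun _ hN => Nat.le_log_of_pow_le hb hN⟩
  have hbound : Tendsto (fun N : ℕ => Real.log a / Real.log b * (1 + (Nat.log b N : ℝ)⁻¹))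
      atTop (nhds (Real.log a / Real.log b)) := by
    simpa using ((tendsto_inv_atTop_zero.comp
      (tendsto_natCast_atTop_atTop.comp hlog)).const_add 1).const_mul (Real.log a / Real.log b)
  rw [upperMassDim, ← hbound.limsup_eq]
  exact limsup_le_limsup (eventually_atTop.2 ⟨b, fun N hN => log_ncard_div_log_le hb hcard hN⟩)
    (isCoboundedUnder_le_of_le atTop fun N =>
      div_nonneg (Real.log_natCast_nonneg _) (Real.log_natCast_nonneg _))
    hbound.isBoundedUnder_le

end MassDimension

/-- If `A ⊆ ℕ₀` is `×r`-invariant and its mass dimension equals `1`, then `A = ℕ₀`. -/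
theorem stmt18 (r : ℕ) (hr : 2 ≤ r) (A : Set ℕ) (hA : TimesRInvariant r A)
    (hdim : upperMassDim A = 1) : A = Set.univ := by
  refine Set.eq_univ_of_forall fun m => by_contra fun hm => ?_
  set b := r ^ (Nat.log r m + 1)
  have hmb : m < b := Nat.lt_pow_succ_log_self hr m
  have hb : 2 ≤ b := hr.trans (Nat.le_self_pow (Nat.succ_ne_zero _) r)
  have hdim_le := upperMassDim_le_of_ncard_le hb (hA.ncard_lt_pow_le hr hm hmb)
  have hratio : Real.log (b - 1 : ℕ) / Real.log b < 1 := by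
    rw [div_lt_one (Real.log_pos (by exact_mod_cast hb))]
    exact Real.log_lt_log (by exact_mod_cast (by omega : 0 < b - 1)) (by exact_mod_cast (by omega))
  linarith
end
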